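/- arXiv:0905.0126 — 5 statements merged into one kernel-verified Lean document; each statement's English description precedes it below -/
import Mathlib

section
/- Let R = [a₁, b₁] × [a₂, b₂] be a closed rectangle in ℝ² with a₁ < b₁ and a₂ < b₂. Let φ : ℝ² → ℝ be continuous on R and differentiable on its interior, and let η : ℝ² → ℝ be twice continuously differentiable on an open neighborhood of R. Suppose η is constant on the boundary ∂R. Then ∫_R ( (∂φ/∂x)(∂η/∂y) − (∂φ/∂y)(∂η/∂x) ) dV = 0, i.e. ∫_R ∇φ · ∇^⊥η dV = 0. -/
/-!
Green's theorem applied to the flux `(φ ∂_y η, -φ ∂_x η)`: by the symmetry of the second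
derivatives of `η` its divergence is `φ_x η_y − φ_y η_x`, so the integral equals the flux
through `∂R`. On each edge the integrand is `φ` times the derivative of `η` along that edge,
which vanishes because `η` is constant on `∂R`.
-/

open MeasureTheory Set Filter Topology

section Calculus

variable {E F : Type*} [NormedAddCommGroup E] [NormedSpace ℝ E]
  [NormedAddCommGroup F] [NormedSpace ℝ F]

theorem fderiv_apply_eq_zero_of_eqOn_of_eventually_mem {f : E → F} {S : Set E} {c : F}
    {x v : E} (hf : DifferentiableAt ℝ f x) (hS : ∀ p ∈ S, f p = c)
    (hx : ∀ᶠ t : ℝ in 𝓝 0, x + t • v ∈ S) : fderiv ℝ f x v = 0 := by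
  have hline : HasDerivAt (fun t : ℝ => x + t • v) v 0 := by
    simpa using ((hasDerivAt_id (0 : ℝ)).smul_const v).const_add x
  have hderiv : HasDerivAt (fun t : ℝ => f (x + t • v)) (fderiv ℝ f x v) 0 :=
    hf.hasFDerivAt.comp_hasDerivAt_of_eq 0 hline (by simp)
  have hconst : HasDerivAt (fun t : ℝ => f (x + t • v)) 0 0 :=
    (hasDerivAt_const 0 c).congr_of_eventuallyEq (hx.mono fun t ht => hS _ ht)
  exact hderiv.unique hconst

variable {φ η : E → ℝ} {q : E}

noncomputable def mulPartialFDeriv (φ η : E → ℝ) (w q : E) : E →L[ℝ] ℝ :=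
  φ q • (fderiv ℝ (fderiv ℝ η) q).flip w + fderiv ℝ η q w • fderiv ℝ φ q

theorem hasFDerivAt_mul_fderiv_apply (hφ : DifferentiableAt ℝ φ q) (hη : ContDiffAt ℝ 2 η q)
    (w : E) : HasFDerivAt (fun p => φ p * fderiv ℝ η p w) (mulPartialFDeriv φ η w q) q := by
  have hDη : DifferentiableAt ℝ (fderiv ℝ η) q :=
    (hη.fderiv_right (m := 1) (by norm_num)).differentiableAt one_ne_zero
  have hpartial :
      HasFDerivAt (fun p => fderiv ℝ η p w) ((fderiv ℝ (fderiv ℝ η) q).flip w) q := by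
    simpa using hDη.hasFDerivAt.clm_apply (hasFDerivAt_const w q)
  exact hφ.hasFDerivAt.mul hpartial

theorem mulPartialFDeriv_apply_sub (hη : IsSymmSndFDerivAt ℝ η q) (v w : E) :
    mulPartialFDeriv φ η w q v - mulPartialFDeriv φ η v q w =
      fderiv ℝ φ q v * fderiv ℝ η q w - fderiv ℝ φ q w * fderiv ℝ η q v := by
  simp only [mulPartialFDeriv, add_apply, smul_apply, ContinuousLinearMap.flip_apply,
    smul_eq_mul, hη v w]
  ring

end Calculus

/-- `∇φ · ∇^⊥η = φ_x η_y − φ_y η_x`. -/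
noncomputable def planarJacobian (φ η : ℝ × ℝ → ℝ) (q : ℝ × ℝ) : ℝ :=
  fderiv ℝ φ q (1, 0) * fderiv ℝ η q (0, 1) - fderiv ℝ φ q (0, 1) * fderiv ℝ η q (1, 0)

section Rectangle

variable {a₁ b₁ a₂ b₂ c : ℝ} {φ η : ℝ × ℝ → ℝ}

theorem frontier_Icc_prod_Icc (h₁ : a₁ ≤ b₁) (h₂ : a₂ ≤ b₂) :
    frontier (Icc a₁ b₁ ×ˢ Icc a₂ b₂) = Icc a₁ b₁ ×ˢ {a₂, b₂} ∪ {a₁, b₁} ×ˢ Icc a₂ b₂ := by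
  rw [frontier_prod_eq, closure_Icc, closure_Icc, frontier_Icc h₁, frontier_Icc h₂]

theorem integral_planarJacobian_Icc_prod_Icc (h₁ : a₁ ≤ b₁) (h₂ : a₂ ≤ b₂)
    (hφc : ContinuousOn φ (Icc a₁ b₁ ×ˢ Icc a₂ b₂))
    (hφd : ∀ q ∈ Ioo a₁ b₁ ×ˢ Ioo a₂ b₂, DifferentiableAt ℝ φ q)
    (hη : ∀ q ∈ Icc a₁ b₁ ×ˢ Icc a₂ b₂, ContDiffAt ℝ 2 η q)
    (hint : IntegrableOn (planarJacobian φ η) (Icc a₁ b₁ ×ˢ Icc a₂ b₂)) :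
    ∫ q in Icc a₁ b₁ ×ˢ Icc a₂ b₂, planarJacobian φ η q =
      (∫ x in a₁..b₁, φ (x, a₂) * fderiv ℝ η (x, a₂) (1, 0))
        - (∫ x in a₁..b₁, φ (x, b₂) * fderiv ℝ η (x, b₂) (1, 0))
        + (∫ y in a₂..b₂, φ (b₁, y) * fderiv ℝ η (b₁, y) (0, 1))
        - ∫ y in a₂..b₂, φ (a₁, y) * fderiv ℝ η (a₁, y) (0, 1) := by
  have hdiv : EqOn (planarJacobian φ η)
      (fun q => mulPartialFDeriv φ η (0, 1) q (1, 0) + (-mulPartialFDeriv φ η (1, 0) q) (0, 1))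
      (Icc a₁ b₁ ×ˢ Icc a₂ b₂) := fun q hq => by
    simp only [planarJacobian, neg_apply, ← sub_eq_add_neg,
      mulPartialFDeriv_apply_sub ((hη q hq).isSymmSndFDerivAt (by simp))]
  have hDηc : ContinuousOn (fderiv ℝ η) (Icc a₁ b₁ ×ˢ Icc a₂ b₂) := fun q hq =>
    ((hη q hq).fderiv_right (m := 0) (by norm_num)).continuousAt.continuousWithinAt
  have hIoo : Ioo a₁ b₁ ×ˢ Ioo a₂ b₂ ⊆ Icc a₁ b₁ ×ˢ Icc a₂ b₂ :=
    prod_mono Ioo_subset_Icc_self Ioo_subset_Icc_self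
  rw [integrableOn_congr_fun hdiv (measurableSet_Icc.prod measurableSet_Icc)] at hint
  rw [setIntegral_congr_fun (measurableSet_Icc.prod measurableSet_Icc) hdiv]
  rw [Icc_prod_Icc] at hint hφc hDηc ⊢
  rw [integral_divergence_prod_Icc_of_hasFDerivAt_off_countable_of_le
    (fun q => φ q * fderiv ℝ η q (0, 1)) (fun q => -(φ q * fderiv ℝ η q (1, 0)))
    _ _ (a₁, a₂) (b₁, b₂) ⟨h₁, h₂⟩ ∅ countable_empty
    (hφc.mul (hDηc.clm_apply continuousOn_const))
    (hφc.mul (hDηc.clm_apply continuousOn_const)).neg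
    (fun q hq => hasFDerivAt_mul_fderiv_apply (hφd q hq.1) (hη q (hIoo hq.1)) _)
    (fun q hq => (hasFDerivAt_mul_fderiv_apply (hφd q hq.1) (hη q (hIoo hq.1)) _).neg) hint]
  simp only [intervalIntegral.integral_neg]
  ring

theorem intervalIntegral_mul_fderiv_vertical_edge_eq_zero {x₀ : ℝ}
    (h₁ : a₁ ≤ b₁) (h₂ : a₂ ≤ b₂) (hx₀ : x₀ = a₁ ∨ x₀ = b₁)
    (hη : ∀ q ∈ Icc a₁ b₁ ×ˢ Icc a₂ b₂, DifferentiableAt ℝ η q)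
    (hc : ∀ q ∈ frontier (Icc a₁ b₁ ×ˢ Icc a₂ b₂), η q = c) :
    ∫ y in a₂..b₂, φ (x₀, y) * fderiv ℝ η (x₀, y) (0, 1) = 0 := by
  have hx₀mem : x₀ ∈ Icc a₁ b₁ := by rcases hx₀ with rfl | rfl <;> simp [h₁]
  refine (intervalIntegral.integral_congr_Ioo_of_le h₂ fun y hy => ?_).trans
    (intervalIntegral.integral_zero (a := a₂) (b := b₂))
  have hedge : ∀ᶠ t : ℝ in 𝓝 0,
      (x₀, y) + t • ((0 : ℝ), (1 : ℝ)) ∈ frontier (Icc a₁ b₁ ×ˢ Icc a₂ b₂) := by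
    filter_upwards [Ioo_mem_nhds (sub_neg.2 hy.1) (sub_pos.2 hy.2)] with t ht
    rw [frontier_Icc_prod_Icc h₁ h₂]
    refine Or.inr ⟨by simpa using hx₀, ?_, ?_⟩ <;> simp <;> linarith [ht.1, ht.2]
  simp [fderiv_apply_eq_zero_of_eqOn_of_eventually_mem
    (hη _ ⟨hx₀mem, Ioo_subset_Icc_self hy⟩) hc hedge]

theorem intervalIntegral_mul_fderiv_horizontal_edge_eq_zero {y₀ : ℝ}
    (h₁ : a₁ ≤ b₁) (h₂ : a₂ ≤ b₂) (hy₀ : y₀ = a₂ ∨ y₀ = b₂)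
    (hη : ∀ q ∈ Icc a₁ b₁ ×ˢ Icc a₂ b₂, DifferentiableAt ℝ η q)
    (hc : ∀ q ∈ frontier (Icc a₁ b₁ ×ˢ Icc a₂ b₂), η q = c) :
    ∫ x in a₁..b₁, φ (x, y₀) * fderiv ℝ η (x, y₀) (1, 0) = 0 := by
  have hy₀mem : y₀ ∈ Icc a₂ b₂ := by rcases hy₀ with rfl | rfl <;> simp [h₂]
  refine (intervalIntegral.integral_congr_Ioo_of_le h₁ fun x hx => ?_).trans
    (intervalIntegral.integral_zero (a := a₁) (b := b₁))
  have hedge : ∀ᶠ t : ℝ in 𝓝 0,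
      (x, y₀) + t • ((1 : ℝ), (0 : ℝ)) ∈ frontier (Icc a₁ b₁ ×ˢ Icc a₂ b₂) := by
    filter_upwards [Ioo_mem_nhds (sub_neg.2 hx.1) (sub_pos.2 hx.2)] with t ht
    rw [frontier_Icc_prod_Icc h₁ h₂]
    refine Or.inl ⟨⟨?_, ?_⟩, by simpa using hy₀⟩ <;> simp <;> linarith [ht.1, ht.2]
  simp [fderiv_apply_eq_zero_of_eqOn_of_eventually_mem
    (hη _ ⟨Ioo_subset_Icc_self hx, hy₀mem⟩) hc hedge]

end Rectangle

/-- The key integral identity in the proof of the paper's Steady Geostrophic States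
theorem, on a rectangle `R = [a₁,b₁] × [a₂,b₂]`: if `φ` is continuous on `R` and
differentiable on its interior, `η` is `C²` on a neighbourhood of `R`, and `η` is
constant on the boundary `∂R`, then `∫_R ∇φ · ∇^⊥η dV = 0`, i.e.
`∫_R (φ_x η_y − φ_y η_x) dV = 0`. -/
theorem jacobian_integral_rectangle
    (a₁ b₁ a₂ b₂ : ℝ) (h1 : a₁ < b₁) (h2 : a₂ < b₂)
    (R : Set (ℝ × ℝ)) (hR : R = Set.Icc a₁ b₁ ×ˢ Set.Icc a₂ b₂)
    (φ : ℝ × ℝ → ℝ) (hφc : ContinuousOn φ R)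
    (hφd : ∀ q ∈ interior R, DifferentiableAt ℝ φ q)
    (η : ℝ × ℝ → ℝ)
    (hη : ∃ U : Set (ℝ × ℝ), IsOpen U ∧ R ⊆ U ∧ ContDiffOn ℝ 2 η U)
    (hconst : ∃ c : ℝ, ∀ q ∈ frontier R, η q = c) :
    ∫ q in R, (fderiv ℝ φ q (1, 0) * fderiv ℝ η q (0, 1)
      - fderiv ℝ φ q (0, 1) * fderiv ℝ η q (1, 0)) = 0 := by
  subst hR
  obtain ⟨U, hU, hRU, hηU⟩ := hη
  obtain ⟨c, hc⟩ := hconst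
  have hη2 (q) (hq : q ∈ Icc a₁ b₁ ×ˢ Icc a₂ b₂) : ContDiffAt ℝ 2 η q :=
    (hηU q (hRU hq)).contDiffAt (hU.mem_nhds (hRU hq))
  have hηd (q) (hq : q ∈ Icc a₁ b₁ ×ˢ Icc a₂ b₂) : DifferentiableAt ℝ η q :=
    (hη2 q hq).differentiableAt two_ne_zero
  change ∫ q in _, planarJacobian φ η q = 0
  -- Without integrability the integral is `0` by convention.
  by_cases hint : IntegrableOn (planarJacobian φ η) (Icc a₁ b₁ ×ˢ Icc a₂ b₂)
  swap
  · exact integral_undef hint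
  rw [interior_prod_eq, interior_Icc, interior_Icc] at hφd
  rw [integral_planarJacobian_Icc_prod_Icc h1.le h2.le hφc hφd hη2 hint,
    intervalIntegral_mul_fderiv_horizontal_edge_eq_zero h1.le h2.le (.inl rfl) hηd hc,
    intervalIntegral_mul_fderiv_horizontal_edge_eq_zero h1.le h2.le (.inr rfl) hηd hc,
    intervalIntegral_mul_fderiv_vertical_edge_eq_zero h1.le h2.le (.inl rfl) hηd hc,
    intervalIntegral_mul_fderiv_vertical_edge_eq_zero h1.le h2.le (.inr rfl) hηd hc]
  norm_num
end

section
/- Let Ω ⊆ ℝ² be a measurable set, V a linear subspace of L²(Ω; ℝ²), and H a set of functions φ : ℝ² → ℝ that are differentiable on Ω with the equivalence class of ∇φ restricted to Ω belonging to V. Suppose there is a constant λ > 0 such that ∫_Ω |∇φ|² dV ≥ λ ∫_Ω φ² dV for every φ ∈ H. Then for every φ ∈ H that is not zero almost everywhere on Ω, sup over nonzero w ∈ V of ( ∫_Ω w · ∇φ dV ) / ( ∫_Ω |w|² dV )^{1/2} ≥ √λ · ( ∫_Ω φ² dV )^{1/2}. -/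
/-!
The embedding `∇H ⊆ V` puts `∇φ` itself among the test fields `w`. By Cauchy–Schwarz in
`L²(Ω; ℝ²)` the quotient `⟪w, ∇φ⟫ / ‖w‖` never exceeds `‖∇φ‖`, and `w = ∇φ` attains it, so the
supremum equals `‖∇φ‖_{L²}`; the Rayleigh bound gives `‖∇φ‖_{L²} ≥ √λ ‖φ‖_{L²}`.
-/

open MeasureTheory RealInnerProductSpace

theorem sSup_image_inner_div_norm_eq_norm {F : Type*} [NormedAddCommGroup F]
    [InnerProductSpace ℝ F] {T : Set F} {v : F} (hv : v ∈ insert 0 T) :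
    sSup ((fun w => ⟪w, v⟫ / ‖w‖) '' T) = ‖v‖ := by
  rcases hv with rfl | hvT
  · have hzero : ∀ r ∈ (fun w => ⟪w, (0 : F)⟫ / ‖w‖) '' T, r = 0 := by
      rintro _ ⟨w, -, rfl⟩
      simp
    rw [norm_zero]
    exact le_antisymm (Real.sSup_nonpos fun r hr => (hzero r hr).le)
      (Real.sSup_nonneg fun r hr => (hzero r hr).ge)
  · refine IsGreatest.csSup_eq ⟨⟨v, hvT, ?_⟩, ?_⟩
    · change ⟪v, v⟫ / ‖v‖ = ‖v‖
      rw [real_inner_self_eq_norm_sq, sq, mul_self_div_self]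
    · rintro _ ⟨w, -, rfl⟩
      exact div_le_of_le_mul₀ (norm_nonneg w) (norm_nonneg v)
        ((real_inner_le_norm w v).trans_eq (mul_comm _ _))

namespace MeasureTheory.L2

variable {α E : Type*} [MeasurableSpace α] {μ : Measure α} [NormedAddCommGroup E]
  [InnerProductSpace ℝ E]

theorem inner_eq_integral_of_ae_eq {F G : Lp E 2 μ} {f g : α → E} (hF : F =ᵐ[μ] f)
    (hG : G =ᵐ[μ] g) : ⟪F, G⟫ = ∫ x, ⟪f x, g x⟫ ∂μ := by
  rw [inner_def]
  refine integral_congr_ae ?_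
  filter_upwards [hF, hG] with x hFx hGx
  rw [hFx, hGx]

theorem norm_eq_sqrt_integral_of_ae_eq {F : Lp E 2 μ} {f : α → E} (hF : F =ᵐ[μ] f) :
    ‖F‖ = √(∫ x, ‖f x‖ ^ 2 ∂μ) := by
  simp only [norm_eq_sqrt_real_inner F, inner_eq_integral_of_ae_eq hF hF,
    real_inner_self_eq_norm_sq]

end MeasureTheory.L2

open MeasureTheory.L2 in
theorem sSup_integral_inner_div_sqrt_eq_sqrt_integral_norm_sq {α E : Type*}
    [MeasurableSpace α] {μ : Measure α} [NormedAddCommGroup E] [InnerProductSpace ℝ E]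
    {V : Set (α → E)} (hV : ∀ w ∈ V, MemLp w 2 μ) {g f : α → E} (hg : g ∈ V)
    (hgf : g =ᵐ[μ] f) :
    sSup {r : ℝ | ∃ w ∈ V, ¬ (w =ᵐ[μ] 0) ∧
        r = (∫ x, ⟪w x, f x⟫ ∂μ) / √(∫ x, ‖w x‖ ^ 2 ∂μ)} =
      √(∫ x, ‖f x‖ ^ 2 ∂μ) := by
  set G := (hV g hg).toLp g
  have hGf : G =ᵐ[μ] f := (hV g hg).coeFn_toLp.trans hgf
  have hquot : ∀ (W : Lp E 2 μ) (w : α → E), W =ᵐ[μ] w →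
      ⟪W, G⟫ / ‖W‖ = (∫ x, ⟪w x, f x⟫ ∂μ) / √(∫ x, ‖w x‖ ^ 2 ∂μ) := fun W w hW => by
    rw [inner_eq_integral_of_ae_eq hW hGf, norm_eq_sqrt_integral_of_ae_eq hW]
  set T := {W : Lp E 2 μ | ∃ w ∈ V, ¬ (w =ᵐ[μ] 0) ∧ W =ᵐ[μ] w}
  have hset : {r : ℝ | ∃ w ∈ V, ¬ (w =ᵐ[μ] 0) ∧
      r = (∫ x, ⟪w x, f x⟫ ∂μ) / √(∫ x, ‖w x‖ ^ 2 ∂μ)} = (fun W => ⟪W, G⟫ / ‖W‖) '' T := by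
    ext r
    constructor
    · rintro ⟨w, hw, hw0, rfl⟩
      exact ⟨(hV w hw).toLp w, ⟨w, hw, hw0, (hV w hw).coeFn_toLp⟩,
        hquot _ w (hV w hw).coeFn_toLp⟩
    · rintro ⟨W, ⟨w, hw, hw0, hW⟩, rfl⟩
      exact ⟨w, hw, hw0, hquot W w hW⟩
  have hGT : G ∈ insert 0 T := by
    by_cases hg0 : g =ᵐ[μ] 0
    · exact Or.inl (Lp.eq_zero_iff_ae_eq_zero.mpr ((hV g hg).coeFn_toLp.trans hg0))
    · exact Or.inr ⟨g, hg, hg0, (hV g hg).coeFn_toLp⟩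
  rw [hset, sSup_image_inner_div_norm_eq_norm hGT, norm_eq_sqrt_integral_of_ae_eq hGf]

theorem infsup_theorem_general
    (Ω : Set (EuclideanSpace ℝ (Fin 2)))
    (V : Submodule ℝ (EuclideanSpace ℝ (Fin 2) → EuclideanSpace ℝ (Fin 2)))
    (hV : ∀ w ∈ V, MemLp w 2 (volume.restrict Ω))
    (H : Set (EuclideanSpace ℝ (Fin 2) → ℝ))
    (hH : ∀ φ ∈ H, (∀ x ∈ Ω, DifferentiableAt ℝ φ x) ∧
      ∃ gφ ∈ V, gφ =ᵐ[volume.restrict Ω] fun x => gradient φ x)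
    (lam : ℝ)
    (hRayleigh : ∀ φ ∈ H,
      lam * ∫ x in Ω, (φ x) ^ 2 ≤ ∫ x in Ω, ‖gradient φ x‖ ^ 2) :
    ∀ φ ∈ H, ¬ (φ =ᵐ[volume.restrict Ω] (0 : EuclideanSpace ℝ (Fin 2) → ℝ)) →
      Real.sqrt lam * Real.sqrt (∫ x in Ω, (φ x) ^ 2) ≤
        sSup {r : ℝ | ∃ w ∈ V,
          ¬ (w =ᵐ[volume.restrict Ω] (0 : EuclideanSpace ℝ (Fin 2) → EuclideanSpace ℝ (Fin 2))) ∧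
          r = (∫ x in Ω, ⟪w x, gradient φ x⟫) / Real.sqrt (∫ x in Ω, ‖w x‖ ^ 2)} := by
  intro φ hφ _
  obtain ⟨-, g, hg, hgφ⟩ := hH φ hφ
  rw [← Real.sqrt_mul' _ (integral_nonneg fun x => sq_nonneg (φ x))]
  exact (Real.sqrt_le_sqrt (hRayleigh φ hφ)).trans_eq
    (sSup_integral_inner_div_sqrt_eq_sqrt_integral_norm_sq (V := V) hV hg hgφ).symm

/-- The paper's Inf-Sup Theorem: if the finite element pair `(H, V)` satisfies the
embedding condition `∇H ⊆ V` and the Rayleigh-quotient lower bound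
`∫_Ω |∇φ|² ≥ λ ∫_Ω φ²` holds for all `φ ∈ H` with a constant `λ > 0`, then the inf-sup
condition holds with constant `β = √λ`: for every `φ ∈ H` not a.e. zero,
`sup_{w ∈ V, w ≠ 0} (∫_Ω w · ∇φ) / ‖w‖_{L²} ≥ √λ · ‖φ‖_{L²}`. -/
theorem infsup_theorem
    (Ω : Set (EuclideanSpace ℝ (Fin 2))) (hΩ : MeasurableSet Ω)
    (V : Submodule ℝ (EuclideanSpace ℝ (Fin 2) → EuclideanSpace ℝ (Fin 2)))
    (hV : ∀ w ∈ V, MemLp w 2 (volume.restrict Ω))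
    (H : Set (EuclideanSpace ℝ (Fin 2) → ℝ))
    (hH : ∀ φ ∈ H, (∀ x ∈ Ω, DifferentiableAt ℝ φ x) ∧
      ∃ gφ ∈ V, gφ =ᵐ[volume.restrict Ω] fun x => gradient φ x)
    (lam : ℝ) (hlam : 0 < lam)
    (hRayleigh : ∀ φ ∈ H,
      lam * ∫ x in Ω, (φ x) ^ 2 ≤ ∫ x in Ω, ‖gradient φ x‖ ^ 2) :
    ∀ φ ∈ H, ¬ (φ =ᵐ[volume.restrict Ω] (0 : EuclideanSpace ℝ (Fin 2) → ℝ)) →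
      Real.sqrt lam * Real.sqrt (∫ x in Ω, (φ x) ^ 2) ≤
        sSup {r : ℝ | ∃ w ∈ V,
          ¬ (w =ᵐ[volume.restrict Ω] (0 : EuclideanSpace ℝ (Fin 2) → EuclideanSpace ℝ (Fin 2))) ∧
          r = (∫ x in Ω, ⟪w x, gradient φ x⟫) / Real.sqrt (∫ x in Ω, ‖w x‖ ^ 2)} :=
  infsup_theorem_general Ω V hV H hH lam hRayleigh
end

section
/- Let Ω ⊆ ℝ³ be a measurable set and let V be a linear subspace of L²(Ω; ℝ³) that is closed under the map w ↦ k × w, where k = (0, 0, 1). Let p : ℝ³ → ℝ be differentiable on Ω with the equivalence class of ∇p restricted to Ω belonging to V, let T ∈ L²(Ω; ℝ) be such that the vertical field (0, 0, T) belongs to V, and let u ∈ V. Let f, γ be real constants and ρ₀ > 0. If f ∫_Ω w · (k × u) dV = −(1/ρ₀) ∫_Ω w · ∇p dV + γ ∫_Ω w₃ T dV for every w = (w₁, w₂, w₃) ∈ V, then f k × u = −(1/ρ₀) ∇p + γ T k almost everywhere on Ω; in particular the horizontal components satisfy −f u₂ = −(1/ρ₀) ∂p/∂x and f u₁ = −(1/ρ₀)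 ∂p/∂y a.e. (geostrophic balance) and the vertical component satisfies (1/ρ₀) ∂p/∂z = γ T a.e. (hydrostatic balance). -/
open MeasureTheory RealInnerProductSpace

/-!
Since `V` is closed under `w ↦ k × w` and contains `T k` and a representative of `∇p`, the
residual `r = f k × u + (1/ρ₀) ∇p − γ T k` of the balance equation agrees a.e. with an element
of `V`, and the weak balance says that `r` is `L²`-orthogonal to every element of `V`.
Testing against `r` itself gives `∫_Ω |r|² = 0`, so `r = 0` almost everywhere on `Ω`.
-/

/-- For `u = (u₁, u₂, u₃) ∈ ℝ³` and `k = (0, 0, 1)`, the cross product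
`k × u = (−u₂, u₁, 0)`. -/
noncomputable def kcross (v : EuclideanSpace ℝ (Fin 3)) : EuclideanSpace ℝ (Fin 3) :=
  WithLp.toLp 2 ![-(v 1), v 0, 0]

/-- The vertical vector field `(0, 0, s) ∈ ℝ³`. -/
noncomputable def vert (s : ℝ) : EuclideanSpace ℝ (Fin 3) :=
  WithLp.toLp 2 ![0, 0, s]

section InnerIntegral

variable {α E : Type*} [MeasurableSpace α] {μ : Measure α}
  [NormedAddCommGroup E] [InnerProductSpace ℝ E] {w a b : α → E}

theorem MeasureTheory.MemLp.integrable_inner (hw : MemLp w 2 μ) (ha : MemLp a 2 μ) :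
    Integrable (fun x => ⟪w x, a x⟫) μ := by
  refine (L2.integrable_inner (𝕜 := ℝ) (hw.toLp w) (ha.toLp a)).congr ?_
  filter_upwards [hw.coeFn_toLp, ha.coeFn_toLp] with x hwx hax
  rw [hwx, hax]

theorem ae_eq_zero_of_integral_inner_self_eq_zero (hw : MemLp w 2 μ)
    (h : ∫ x, ⟪w x, w x⟫ ∂μ = 0) : w =ᵐ[μ] 0 := by
  have hnonneg : 0 ≤ᵐ[μ] fun x => ⟪w x, w x⟫ :=
    Filter.Eventually.of_forall fun _ => real_inner_self_nonneg
  filter_upwards [(integral_eq_zero_iff_of_nonneg_ae hnonneg (hw.integrable_inner hw)).mp h]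
    with x hx
  exact inner_self_eq_zero.mp hx

theorem ae_eq_zero_of_ae_eq_mem_of_forall_integral_inner_eq_zero {V : Submodule ℝ (α → E)}
    (hV : ∀ v ∈ V, MemLp v 2 μ) (ha : a ∈ V) (hab : a =ᵐ[μ] b)
    (horth : ∀ v ∈ V, ∫ x, ⟪v x, b x⟫ ∂μ = 0) : b =ᵐ[μ] 0 := by
  refine ae_eq_zero_of_integral_inner_self_eq_zero ((hV a ha).ae_eq hab) ?_
  rw [← horth a ha]
  exact integral_congr_ae (hab.mono fun x hx => by simp only [hx])

end InnerIntegral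

theorem inner_vert (w : EuclideanSpace ℝ (Fin 3)) (s : ℝ) : ⟪w, vert s⟫ = w 2 * s := by
  simp [PiLp.inner_apply, vert, Fin.sum_univ_three, mul_comm]

theorem balance_components_of_residual_eq_zero {f c γ s : ℝ} {v g : EuclideanSpace ℝ (Fin 3)}
    (h : f • kcross v + c • g - γ • vert s = 0) :
    f • kcross v = -(c • g) + γ • vert s ∧
      -(f * v 1) = -(c * g 0) ∧ f * v 0 = -(c * g 1) ∧ c * g 2 = γ * s := by
  have hbal : f • kcross v = -(c • g) + γ • vert s := by
    rw [← sub_eq_zero, ← h]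
    abel
  have hcomp (i : Fin 3) : (f • kcross v) i = (-(c • g) + γ • vert s) i := by rw [hbal]
  refine ⟨hbal, ?_, ?_, ?_⟩
  · simpa [kcross, vert] using hcomp 0
  · simpa [kcross, vert] using hcomp 1
  · have h2 := hcomp 2
    simp [kcross, vert] at h2
    linarith

theorem hydrostatic_geostrophic_embedding_lemma_general
    (Ω : Set (EuclideanSpace ℝ (Fin 3)))
    (V : Submodule ℝ (EuclideanSpace ℝ (Fin 3) → EuclideanSpace ℝ (Fin 3)))
    (hV : ∀ w ∈ V, MemLp w 2 (volume.restrict Ω))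
    (hVk : ∀ w ∈ V, (fun x => kcross (w x)) ∈ V)
    (p : EuclideanSpace ℝ (Fin 3) → ℝ)
    (hgradV : ∃ gp ∈ V, gp =ᵐ[volume.restrict Ω] fun x => gradient p x)
    (T : EuclideanSpace ℝ (Fin 3) → ℝ)
    (hTV : (fun x => vert (T x)) ∈ V)
    (u : EuclideanSpace ℝ (Fin 3) → EuclideanSpace ℝ (Fin 3)) (hu : u ∈ V)
    (f γ ρ₀ : ℝ)
    (hbal : ∀ w ∈ V,
      f * ∫ x in Ω, ⟪w x, kcross (u x)⟫ =
        -((1 / ρ₀) * ∫ x in Ω, ⟪w x, gradient p x⟫)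
          + γ * ∫ x in Ω, w x 2 * T x) :
    ∀ᵐ x ∂(volume.restrict Ω),
      f • kcross (u x) = -((1 / ρ₀) • gradient p x) + γ • vert (T x) ∧
      -(f * u x 1) = -((1 / ρ₀) * gradient p x 0) ∧
      f * u x 0 = -((1 / ρ₀) * gradient p x 1) ∧
      (1 / ρ₀) * gradient p x 2 = γ * T x := by
  obtain ⟨gp, hgpV, hgp⟩ := hgradV
  set r := fun x => f • kcross (u x) + (1 / ρ₀) • gradient p x - γ • vert (T x)
  set r₀ := fun x => f • kcross (u x) + (1 / ρ₀) • gp x - γ • vert (T x)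
  have hr₀V : r₀ ∈ V :=
    V.sub_mem (V.add_mem (V.smul_mem f (hVk u hu)) (V.smul_mem (1 / ρ₀) hgpV)) (V.smul_mem γ hTV)
  have hr₀r : r₀ =ᵐ[volume.restrict Ω] r := by
    filter_upwards [hgp] with x hx
    simp only [r₀, r, hx]
  have hk := hV _ (hVk u hu)
  have hg := (hV gp hgpV).ae_eq hgp
  have hv := hV _ hTV
  have horth : ∀ w ∈ V, ∫ x in Ω, ⟪w x, r x⟫ = 0 := fun w hw => by
    have hw2 := hV w hw
    have hwk := (hw2.integrable_inner hk).const_mul f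
    have hwg := (hw2.integrable_inner hg).const_mul (1 / ρ₀)
    have hwv := (hw2.integrable_inner hv).const_mul γ
    simp only [inner_vert] at hwv
    simp only [r, inner_sub_right, inner_add_right, real_inner_smul_right, inner_vert]
    rw [integral_sub (by exact hwk.add hwg) hwv, integral_add hwk hwg, integral_const_mul,
      integral_const_mul, integral_const_mul]
    linarith [hbal w hw]
  filter_upwards [ae_eq_zero_of_ae_eq_mem_of_forall_integral_inner_eq_zero hV hr₀V hr₀r horth]
    with x hx
  exact balance_components_of_residual_eq_zero hx

/-- The three-dimensional embedding lemma underlying the paper's optimal balance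
theorem for the linearised rotating Euler–Boussinesq equations: discrete hydrostatic
and geostrophic balance in a finite element pair satisfying the embedding conditions
implies pointwise balance `f k × u = −(1/ρ₀) ∇p + γ T k` almost everywhere on `Ω`;
componentwise, geostrophic balance `−f u₂ = −(1/ρ₀) p_x`, `f u₁ = −(1/ρ₀) p_y` and
hydrostatic balance `(1/ρ₀) p_z = γ T` hold a.e. -/
theorem hydrostatic_geostrophic_embedding_lemma
    (Ω : Set (EuclideanSpace ℝ (Fin 3))) (hΩ : MeasurableSet Ω)
    (V : Submodule ℝ (EuclideanSpace ℝ (Fin 3) → EuclideanSpace ℝ (Fin 3)))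
    (hV : ∀ w ∈ V, MemLp w 2 (volume.restrict Ω))
    (hVk : ∀ w ∈ V, (fun x => kcross (w x)) ∈ V)
    (p : EuclideanSpace ℝ (Fin 3) → ℝ)
    (hp : ∀ x ∈ Ω, DifferentiableAt ℝ p x)
    (hgradV : ∃ gp ∈ V, gp =ᵐ[volume.restrict Ω] fun x => gradient p x)
    (T : EuclideanSpace ℝ (Fin 3) → ℝ) (hT : MemLp T 2 (volume.restrict Ω))
    (hTV : (fun x => vert (T x)) ∈ V)
    (u : EuclideanSpace ℝ (Fin 3) → EuclideanSpace ℝ (Fin 3)) (hu : u ∈ V)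
    (f γ ρ₀ : ℝ) (hρ₀ : 0 < ρ₀)
    (hbal : ∀ w ∈ V,
      f * ∫ x in Ω, ⟪w x, kcross (u x)⟫ =
        -((1 / ρ₀) * ∫ x in Ω, ⟪w x, gradient p x⟫)
          + γ * ∫ x in Ω, w x 2 * T x) :
    ∀ᵐ x ∂(volume.restrict Ω),
      f • kcross (u x) = -((1 / ρ₀) • gradient p x) + γ • vert (T x) ∧
      -(f * u x 1) = -((1 / ρ₀) * gradient p x 0) ∧
      f * u x 0 = -((1 / ρ₀) * gradient p x 1) ∧
      (1 / ρ₀) * gradient p x 2 = γ * T x :=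
  hydrostatic_geostrophic_embedding_lemma_general Ω V hV hVk p hgradV T hTV u hu f γ ρ₀ hbal
end

section
/- Let B = [a₁, b₁] × [a₂, b₂] × [a₃, b₃] ⊆ ℝ³ with a_i < b_i. Let φ : ℝ³ → ℝ be continuously differentiable on an open neighborhood of B and let ψ : ℝ³ → ℝ be twice continuously differentiable on an open neighborhood of B. Suppose the horizontal tangential derivative of ψ vanishes on the lateral boundary of B: ∂ψ/∂y = 0 on the faces {x = a₁} ∩ B and {x = b₁} ∩ B, and ∂ψ/∂x = 0 on the faces {y = a₂} ∩ B and {y = b₂} ∩ B. Then ∫_B ( (∂φ/∂x)(∂ψ/∂y) − (∂φ/∂y)(∂ψ/∂x) ) dV = 0. -/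
/-!
Symmetry of the second derivative of `ψ` turns the Jacobian `φ_x ψ_y - φ_y ψ_x` into the
divergence `∂_x (φ ψ_y) - ∂_y (φ ψ_x)`. By Fubini and the fundamental theorem of calculus on
each fibre, the two terms integrate to the values of `φ ψ_y` on the faces `x = a₁, b₁` and of
`φ ψ_x` on the faces `y = a₂, b₂`, which vanish by the boundary conditions.
-/

open MeasureTheory Set

section Calculus

variable {E : Type*} [NormedAddCommGroup E] [NormedSpace ℝ E]

/-- The derivative of `φ * ∂ᵥψ` in the direction `u`, by the product rule. -/
noncomputable def derivMulFDeriv (φ ψ : E → ℝ) (u v q : E) : ℝ :=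
  fderiv ℝ φ q u * fderiv ℝ ψ q v + φ q * fderiv ℝ (fderiv ℝ ψ) q u v

theorem HasDerivAt.mul_fderiv_apply {φ ψ : E → ℝ} {γ : ℝ → E} {u : E} {t : ℝ}
    (hγ : HasDerivAt γ u t) (hφ : DifferentiableAt ℝ φ (γ t))
    (hψ : DifferentiableAt ℝ (fderiv ℝ ψ) (γ t)) (v : E) :
    HasDerivAt (fun s => φ (γ s) * fderiv ℝ ψ (γ s) v) (derivMulFDeriv φ ψ u v (γ t)) t := by
  have hψv : HasDerivAt (fun s => fderiv ℝ ψ (γ s) v) (fderiv ℝ (fderiv ℝ ψ) (γ t) u v) t :=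
    ((ContinuousLinearMap.apply ℝ ℝ v).hasFDerivAt.comp (γ t)
      hψ.hasFDerivAt).comp_hasDerivAt t hγ
  exact (hφ.hasFDerivAt.comp_hasDerivAt t hγ).mul hψv

theorem continuousAt_derivMulFDeriv {φ ψ : E → ℝ} {q : E} (hφ : ContDiffAt ℝ 1 φ q)
    (hψ : ContDiffAt ℝ 2 ψ q) (u v : E) : ContinuousAt (derivMulFDeriv φ ψ u v) q := by
  have hφ' : ContinuousAt (fderiv ℝ φ) q := (hφ.fderiv_right (m := 0) le_rfl).continuousAt
  have hψ' : ContinuousAt (fderiv ℝ ψ) q := (hψ.fderiv_right (m := 1) le_rfl).continuousAt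
  have hψ'' : ContinuousAt (fderiv ℝ (fderiv ℝ ψ)) q :=
    ((hψ.fderiv_right (m := 1) le_rfl).fderiv_right (m := 0) le_rfl).continuousAt
  unfold derivMulFDeriv
  fun_prop

theorem fderiv_mul_sub_fderiv_mul_eq {φ ψ : E → ℝ} {q : E} (hψ : IsSymmSndFDerivAt ℝ ψ q)
    (u v : E) :
    fderiv ℝ φ q u * fderiv ℝ ψ q v - fderiv ℝ φ q v * fderiv ℝ ψ q u =
      derivMulFDeriv φ ψ u v q - derivMulFDeriv φ ψ v u q := by
  rw [derivMulFDeriv, derivMulFDeriv, hψ u v]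
  ring

theorem IsCompact.integrableOn_derivMulFDeriv [MeasurableSpace E] [OpensMeasurableSpace E]
    {μ : Measure E} [IsFiniteMeasureOnCompacts μ] {φ ψ : E → ℝ} {K : Set E} (hK : IsCompact K)
    (hφ : ∀ q ∈ K, ContDiffAt ℝ 1 φ q) (hψ : ∀ q ∈ K, ContDiffAt ℝ 2 ψ q) (u v : E) :
    IntegrableOn (derivMulFDeriv φ ψ u v) K μ :=
  (continuousOn_of_forall_continuousAt fun q hq =>
    continuousAt_derivMulFDeriv (hφ q hq) (hψ q hq) u v).integrableOn_compact hK

end Calculus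

theorem setIntegral_Icc_eq_zero_of_hasDerivAt {F : Type*} [NormedAddCommGroup F]
    [NormedSpace ℝ F] [CompleteSpace F] {f f' : ℝ → F} {a b : ℝ} (hab : a ≤ b)
    (hderiv : ∀ x ∈ Icc a b, HasDerivAt f (f' x) x) (hint : IntegrableOn f' (Icc a b))
    (hfab : f a = f b) : ∫ x in Icc a b, f' x = 0 := by
  rw [integral_Icc_eq_integral_Ioc, ← intervalIntegral.integral_of_le hab,
    intervalIntegral.integral_eq_sub_of_hasDerivAt (by rwa [uIcc_of_le hab])
      ((intervalIntegrable_iff_integrableOn_Icc_of_le hab).2 hint), hfab, sub_self]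

section Fubini

variable {α β : Type*} [MeasurableSpace α] [MeasurableSpace β] {μ : Measure α} {ν : Measure β}
  [SFinite μ] [SFinite ν] {F : Type*} [NormedAddCommGroup F] [NormedSpace ℝ F]

theorem setIntegral_prod_eq_zero_of_fiber_left {f : α × β → F} {s : Set α} {t : Set β}
    (ht : MeasurableSet t) (hf : IntegrableOn f (s ×ˢ t) (μ.prod ν))
    (hfiber : ∀ y ∈ t, IntegrableOn (fun x => f (x, y)) s μ → ∫ x in s, f (x, y) ∂μ = 0) :
    ∫ z in s ×ˢ t, f z ∂μ.prod ν = 0 := by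
  rw [IntegrableOn, ← Measure.prod_restrict] at hf
  rw [← Measure.prod_restrict, integral_prod_symm f hf]
  refine integral_eq_zero_of_ae ?_
  filter_upwards [hf.prod_left_ae, ae_restrict_mem ht] with y hy hyt using hfiber y hyt hy

theorem setIntegral_prod_eq_zero_of_fiber_right {f : α × β → F} {s : Set α} {t : Set β}
    (hs : MeasurableSet s) (hf : IntegrableOn f (s ×ˢ t) (μ.prod ν))
    (hfiber : ∀ x ∈ s, IntegrableOn (fun y => f (x, y)) t ν → ∫ y in t, f (x, y) ∂ν = 0) :
    ∫ z in s ×ˢ t, f z ∂μ.prod ν = 0 := by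
  rw [setIntegral_prod f hf]
  rw [IntegrableOn, ← Measure.prod_restrict] at hf
  refine integral_eq_zero_of_ae ?_
  filter_upwards [hf.prod_right_ae, ae_restrict_mem hs] with x hx hxs using hfiber x hxs hx

theorem setIntegral_Icc_prod_eq_zero_of_hasDerivAt [CompleteSpace F] {f g : ℝ × β → F}
    {a b : ℝ} {t : Set β} (hab : a ≤ b) (ht : MeasurableSet t)
    (hg : IntegrableOn g (Icc a b ×ˢ t) (volume.prod ν))
    (hderiv : ∀ y ∈ t, ∀ x ∈ Icc a b, HasDerivAt (fun x => f (x, y)) (g (x, y)) x)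
    (hfab : ∀ y ∈ t, f (a, y) = f (b, y)) :
    ∫ z in Icc a b ×ˢ t, g z ∂volume.prod ν = 0 :=
  setIntegral_prod_eq_zero_of_fiber_left ht hg fun y hy hgy =>
    setIntegral_Icc_eq_zero_of_hasDerivAt hab (hderiv y hy) hgy (hfab y hy)

end Fubini

section Box

variable {E : Type*} [NormedAddCommGroup E] [NormedSpace ℝ E] [MeasurableSpace E]
  {ν : Measure E} [SFinite ν]

theorem setIntegral_Icc_prod_derivMulFDeriv_fst_eq_zero {φ ψ : ℝ × E → ℝ} {a b : ℝ}
    {t : Set E} (hab : a ≤ b) (ht : MeasurableSet t) {v : ℝ × E}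
    (hφ : ∀ q ∈ Icc a b ×ˢ t, DifferentiableAt ℝ φ q)
    (hψ : ∀ q ∈ Icc a b ×ˢ t, DifferentiableAt ℝ (fderiv ℝ ψ) q)
    (hint : IntegrableOn (derivMulFDeriv φ ψ (1, 0) v) (Icc a b ×ˢ t) (volume.prod ν))
    (hbc : ∀ q ∈ Icc a b ×ˢ t, (q.1 = a ∨ q.1 = b) → fderiv ℝ ψ q v = 0) :
    ∫ q in Icc a b ×ˢ t, derivMulFDeriv φ ψ (1, 0) v q ∂volume.prod ν = 0 := by
  refine setIntegral_Icc_prod_eq_zero_of_hasDerivAt (f := fun q => φ q * fderiv ℝ ψ q v)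
    hab ht hint (fun y hy x hx => ?_) fun y hy => ?_
  · exact ((hasDerivAt_id x).prodMk (hasDerivAt_const x y)).mul_fderiv_apply
      (hφ _ ⟨hx, hy⟩) (hψ _ ⟨hx, hy⟩) v
  · simp only [hbc (a, y) ⟨left_mem_Icc.2 hab, hy⟩ (Or.inl rfl),
      hbc (b, y) ⟨right_mem_Icc.2 hab, hy⟩ (Or.inr rfl), mul_zero]

theorem setIntegral_prod_Icc_prod_derivMulFDeriv_snd_fst_eq_zero {F : Type*}
    [NormedAddCommGroup F] [NormedSpace ℝ F] [MeasurableSpace F] {μ : Measure F} [SFinite μ]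
    {φ ψ : F × ℝ × E → ℝ} {s : Set F} {a b : ℝ} {t : Set E} (hs : MeasurableSet s)
    (hab : a ≤ b) (ht : MeasurableSet t) {v : F × ℝ × E}
    (hφ : ∀ q ∈ s ×ˢ Icc a b ×ˢ t, DifferentiableAt ℝ φ q)
    (hψ : ∀ q ∈ s ×ˢ Icc a b ×ˢ t, DifferentiableAt ℝ (fderiv ℝ ψ) q)
    (hint : IntegrableOn (derivMulFDeriv φ ψ (0, 1, 0) v) (s ×ˢ Icc a b ×ˢ t)
      (μ.prod (volume.prod ν)))
    (hbc : ∀ q ∈ s ×ˢ Icc a b ×ˢ t, (q.2.1 = a ∨ q.2.1 = b) → fderiv ℝ ψ q v = 0) :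
    ∫ q in s ×ˢ Icc a b ×ˢ t, derivMulFDeriv φ ψ (0, 1, 0) v q ∂μ.prod (volume.prod ν) = 0 := by
  refine setIntegral_prod_eq_zero_of_fiber_right hs hint fun x hx hint_x => ?_
  refine setIntegral_Icc_prod_eq_zero_of_hasDerivAt
    (f := fun p => φ (x, p) * fderiv ℝ ψ (x, p) v) hab ht hint_x (fun z hz y hy => ?_)
    fun z hz => ?_
  · exact ((hasDerivAt_const y x).prodMk ((hasDerivAt_id y).prodMk (hasDerivAt_const y z))
      ).mul_fderiv_apply (hφ _ ⟨hx, hy, hz⟩) (hψ _ ⟨hx, hy, hz⟩) v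
  · simp only [hbc (x, a, z) ⟨hx, left_mem_Icc.2 hab, hz⟩ (Or.inl rfl),
      hbc (x, b, z) ⟨hx, right_mem_Icc.2 hab, hz⟩ (Or.inr rfl), mul_zero]

end Box

theorem jacobian_integral_box_general
    (a₁ b₁ a₂ b₂ a₃ b₃ : ℝ) (h1 : a₁ < b₁) (h2 : a₂ < b₂)
    (B : Set (ℝ × ℝ × ℝ))
    (hB : B = Set.Icc a₁ b₁ ×ˢ Set.Icc a₂ b₂ ×ˢ Set.Icc a₃ b₃)
    (φ ψ : ℝ × ℝ × ℝ → ℝ)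
    (hφ : ∃ U : Set (ℝ × ℝ × ℝ), IsOpen U ∧ B ⊆ U ∧ ContDiffOn ℝ 1 φ U)
    (hψ : ∃ U : Set (ℝ × ℝ × ℝ), IsOpen U ∧ B ⊆ U ∧ ContDiffOn ℝ 2 ψ U)
    (hbc1 : ∀ q ∈ B, (q.1 = a₁ ∨ q.1 = b₁) → fderiv ℝ ψ q (0, 1, 0) = 0)
    (hbc2 : ∀ q ∈ B, (q.2.1 = a₂ ∨ q.2.1 = b₂) → fderiv ℝ ψ q (1, 0, 0) = 0) :
    ∫ q in B, (fderiv ℝ φ q (1, 0, 0) * fderiv ℝ ψ q (0, 1, 0)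
      - fderiv ℝ φ q (0, 1, 0) * fderiv ℝ ψ q (1, 0, 0)) = 0 := by
  obtain ⟨U, hUo, hBU, hφU⟩ := hφ
  obtain ⟨V, hVo, hBV, hψV⟩ := hψ
  have hφB (q) (hq : q ∈ B) : ContDiffAt ℝ 1 φ q := hφU.contDiffAt (hUo.mem_nhds (hBU hq))
  have hψB (q) (hq : q ∈ B) : ContDiffAt ℝ 2 ψ q := hψV.contDiffAt (hVo.mem_nhds (hBV hq))
  have hφ_diff (q) (hq : q ∈ B) : DifferentiableAt ℝ φ q :=
    (hφB q hq).differentiableAt one_ne_zero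
  have hψ'_diff (q) (hq : q ∈ B) : DifferentiableAt ℝ (fderiv ℝ ψ) q :=
    ((hψB q hq).fderiv_right (m := 1) le_rfl).differentiableAt one_ne_zero
  have hBc : IsCompact B := hB ▸ isCompact_Icc.prod (isCompact_Icc.prod isCompact_Icc)
  have hint := hBc.integrableOn_derivMulFDeriv (μ := volume) hφB hψB
  have hx : ∫ q in B, derivMulFDeriv φ ψ (1, 0, 0) (0, 1, 0) q = 0 := by
    subst hB
    exact setIntegral_Icc_prod_derivMulFDeriv_fst_eq_zero h1.le
      (measurableSet_Icc.prod measurableSet_Icc) hφ_diff hψ'_diff (hint _ _) hbc1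
  have hy : ∫ q in B, derivMulFDeriv φ ψ (0, 1, 0) (1, 0, 0) q = 0 := by
    subst hB
    exact setIntegral_prod_Icc_prod_derivMulFDeriv_snd_fst_eq_zero measurableSet_Icc h2.le
      measurableSet_Icc hφ_diff hψ'_diff (hint _ _) hbc2
  rw [setIntegral_congr_fun hBc.measurableSet fun q hq =>
      fderiv_mul_sub_fderiv_mul_eq ((hψB q hq).isSymmSndFDerivAt (by simp)) _ _,
    integral_sub (hint _ _) (hint _ _), hx, hy, sub_zero]

/-- The three-dimensional vanishing Jacobian integral used in the proof of the paper's
optimal balance theorem for three-dimensional incompressible flow: on a box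
`B = [a₁,b₁] × [a₂,b₂] × [a₃,b₃]`, if `φ` is `C¹` near `B`, `ψ` is `C²` near `B`, and
the horizontal tangential derivative of `ψ` vanishes on the lateral boundary of `B`
(`ψ_y = 0` on the faces `x = a₁`, `x = b₁` and `ψ_x = 0` on the faces `y = a₂`,
`y = b₂`), then `∫_B (φ_x ψ_y − φ_y ψ_x) dV = 0`. -/
theorem jacobian_integral_box
    (a₁ b₁ a₂ b₂ a₃ b₃ : ℝ) (h1 : a₁ < b₁) (h2 : a₂ < b₂) (h3 : a₃ < b₃)
    (B : Set (ℝ × ℝ × ℝ))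
    (hB : B = Set.Icc a₁ b₁ ×ˢ Set.Icc a₂ b₂ ×ˢ Set.Icc a₃ b₃)
    (φ ψ : ℝ × ℝ × ℝ → ℝ)
    (hφ : ∃ U : Set (ℝ × ℝ × ℝ), IsOpen U ∧ B ⊆ U ∧ ContDiffOn ℝ 1 φ U)
    (hψ : ∃ U : Set (ℝ × ℝ × ℝ), IsOpen U ∧ B ⊆ U ∧ ContDiffOn ℝ 2 ψ U)
    (hbc1 : ∀ q ∈ B, (q.1 = a₁ ∨ q.1 = b₁) → fderiv ℝ ψ q (0, 1, 0) = 0)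
    (hbc2 : ∀ q ∈ B, (q.2.1 = a₂ ∨ q.2.1 = b₂) → fderiv ℝ ψ q (1, 0, 0) = 0) :
    ∫ q in B, (fderiv ℝ φ q (1, 0, 0) * fderiv ℝ ψ q (0, 1, 0)
      - fderiv ℝ φ q (0, 1, 0) * fderiv ℝ ψ q (1, 0, 0)) = 0 :=
  jacobian_integral_box_general a₁ b₁ a₂ b₂ a₃ b₃ h1 h2 B hB φ ψ hφ hψ hbc1 hbc2
end

section
/- Let Ω ⊆ ℝⁿ be a measurable set and V a linear subspace of L²(Ω; ℝⁿ). Let p : ℝⁿ → ℝ be differentiable on Ω with the equivalence class of ∇p restricted to Ω belonging to V, let r ∈ V, and let q ∈ V satisfy ∫_Ω w · q dV = ∫_Ω w · ∇p dV for every w ∈ V and ∫_Ω ∇φ · q dV = −∫_Ω ∇φ · r dV for every φ in a set H of functions differentiable on Ω whose gradients (restricted to Ω) lie in V. Then ∫_Ω ∇φ · ∇p dV = −∫_Ω ∇φ · r dV for every φ ∈ H. -/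
open MeasureTheory RealInnerProductSpace

theorem integral_inner_congr_ae_left {α E : Type*} [MeasurableSpace α] {μ : Measure α}
    [NormedAddCommGroup E] [InnerProductSpace ℝ E] {f g : α → E} (hfg : f =ᵐ[μ] g)
    (h : α → E) : ∫ x, ⟪f x, h x⟫ ∂μ = ∫ x, ⟪g x, h x⟫ ∂μ :=
  integral_congr_ae (hfg.mono fun x hx => congrArg (⟪·, h x⟫) hx)

theorem optimal_sparsity_pressure_matrix_general
    (n : ℕ)
    (Ω : Set (EuclideanSpace ℝ (Fin n)))
    (V : Submodule ℝ (EuclideanSpace ℝ (Fin n) → EuclideanSpace ℝ (Fin n)))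
    (H : Set (EuclideanSpace ℝ (Fin n) → ℝ))
    (hH : ∀ φ ∈ H, (∀ x ∈ Ω, DifferentiableAt ℝ φ x) ∧
      ∃ gφ ∈ V, gφ =ᵐ[volume.restrict Ω] fun x => gradient φ x)
    (p : EuclideanSpace ℝ (Fin n) → ℝ)
    (r : EuclideanSpace ℝ (Fin n) → EuclideanSpace ℝ (Fin n))
    (q : EuclideanSpace ℝ (Fin n) → EuclideanSpace ℝ (Fin n))
    (hq1 : ∀ w ∈ V, ∫ x in Ω, ⟪w x, q x⟫ = ∫ x in Ω, ⟪w x, gradient p x⟫)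
    (hq2 : ∀ φ ∈ H, ∫ x in Ω, ⟪gradient φ x, q x⟫ = -∫ x in Ω, ⟪gradient φ x, r x⟫) :
    ∀ φ ∈ H, ∫ x in Ω, ⟪gradient φ x, gradient p x⟫ = -∫ x in Ω, ⟪gradient φ x, r x⟫ := by
  intro φ hφ
  obtain ⟨gφ, hgφV, hgφ⟩ := (hH φ hφ).2
  calc ∫ x in Ω, ⟪gradient φ x, gradient p x⟫
      = ∫ x in Ω, ⟪gφ x, gradient p x⟫ := (integral_inner_congr_ae_left hgφ _).symm
    _ = ∫ x in Ω, ⟪gφ x, q x⟫ := (hq1 gφ hgφV).symm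
    _ = ∫ x in Ω, ⟪gradient φ x, q x⟫ := integral_inner_congr_ae_left hgφ _
    _ = -∫ x in Ω, ⟪gradient φ x, r x⟫ := hq2 φ hφ

/-- The paper's Optimal Sparsity of the Pressure Matrix theorem: in the mixed finite
element discretisation of the pressure Poisson equation, if the embedding condition
`∇H ⊆ V` holds (for the pressure `p` and all test functions `φ ∈ H`), then the mixed
system (with auxiliary discrete gradient `q` and right-hand side `r`) reduces to the
usual single-matrix Galerkin discretisation `∫_Ω ∇φ · ∇p dV = −∫_Ω ∇φ · r dV`. -/
theorem optimal_sparsity_pressure_matrix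
    (n : ℕ)
    (Ω : Set (EuclideanSpace ℝ (Fin n))) (hΩ : MeasurableSet Ω)
    (V : Submodule ℝ (EuclideanSpace ℝ (Fin n) → EuclideanSpace ℝ (Fin n)))
    (hV : ∀ w ∈ V, MemLp w 2 (volume.restrict Ω))
    (H : Set (EuclideanSpace ℝ (Fin n) → ℝ))
    (hH : ∀ φ ∈ H, (∀ x ∈ Ω, DifferentiableAt ℝ φ x) ∧
      ∃ gφ ∈ V, gφ =ᵐ[volume.restrict Ω] fun x => gradient φ x)
    (p : EuclideanSpace ℝ (Fin n) → ℝ)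
    (hp : ∀ x ∈ Ω, DifferentiableAt ℝ p x)
    (hgradp : ∃ gp ∈ V, gp =ᵐ[volume.restrict Ω] fun x => gradient p x)
    (r : EuclideanSpace ℝ (Fin n) → EuclideanSpace ℝ (Fin n)) (hr : r ∈ V)
    (q : EuclideanSpace ℝ (Fin n) → EuclideanSpace ℝ (Fin n)) (hq : q ∈ V)
    (hq1 : ∀ w ∈ V, ∫ x in Ω, ⟪w x, q x⟫ = ∫ x in Ω, ⟪w x, gradient p x⟫)
    (hq2 : ∀ φ ∈ H, ∫ x in Ω, ⟪gradient φ x, q x⟫ = -∫ x in Ω, ⟪gradient φ x, r x⟫) :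
    ∀ φ ∈ H, ∫ x in Ω, ⟪gradient φ x, gradient p x⟫ = -∫ x in Ω, ⟪gradient φ x, r x⟫ :=
  optimal_sparsity_pressure_matrix_general n Ω V H hH p r q hq1 hq2
end
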